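/- A compact Hausdorff space is strongly discrete homogeneous if and only if it is strongly n-homogeneous for every positive integer n. -/

import Mathlib

def IsDiscreteSubset {X : Type*} [TopologicalSpace X] (A : Set X) : Prop :=
  ∀ x : X, ∃ U ∈ nhds x, (U ∩ A).Subsingleton

/-- A space is strongly discrete homogeneous if every bijection between two
discrete subsets extends to a self-homeomorphism. -/
def StronglyDiscreteHomogeneous (X : Type*) [TopologicalSpace X] : Prop :=
  ∀ (A B : Set X) (f : X → X), IsDiscreteSubset A → IsDiscreteSubset B →
    Set.BijOn f A B → ∃ h : X ≃ₜ X, Set.EqOn h f A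

def StronglyNHomogeneous (X : Type*) [TopologicalSpace X] (n : ℕ) : Prop :=
  ∀ (A B : Set X) (f : X → X), A.ncard = n → B.ncard = n → Set.BijOn f A B →
    ∃ h : X ≃ₜ X, Set.EqOn h f A

/-! In a compact T₁ space the discrete subsets are exactly the finite ones (a discrete set is a
locally finite family of singletons), so both properties say that bijections between finite sets
extend to homeomorphisms: a bijection preserves cardinality, and the empty set is handled by the
identity. -/

section

variable {X : Type*} [TopologicalSpace X] {A : Set X}

theorem IsDiscreteSubset.locallyFinite_singletons (hA : IsDiscreteSubset A) :
    LocallyFinite fun a : X => A ∩ {a} := by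
  intro x
  obtain ⟨U, hU, hUA⟩ := hA x
  refine ⟨U, hU, hUA.finite.subset ?_⟩
  rintro a ⟨y, ⟨hyA, rfl⟩, hyU⟩
  exact ⟨hyU, hyA⟩

theorem IsDiscreteSubset.finite [CompactSpace X] (hA : IsDiscreteSubset A) : A.Finite := by
  simpa using hA.locallyFinite_singletons.finite_nonempty_of_compact

theorem Set.Finite.isDiscreteSubset [T1Space X] (hA : A.Finite) : IsDiscreteSubset A := by
  intro x
  refine ⟨(A \ {x})ᶜ, hA.sdiff.isClosed.isOpen_compl.mem_nhds (by simp), ?_⟩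
  refine (Set.subsingleton_singleton (a := x)).anti fun a ⟨haU, haA⟩ => ?_
  by_contra hax
  exact haU ⟨haA, hax⟩

end

theorem compact_stronglyDiscreteHomogeneous_iff_stronglyNHomogeneous
    (X : Type*) [TopologicalSpace X] [CompactSpace X] [T2Space X] :
    StronglyDiscreteHomogeneous X ↔ ∀ n : ℕ, 0 < n → StronglyNHomogeneous X n := by
  constructor
  · intro h n hn A B f hA hB hf
    exact h A B f (Set.finite_of_ncard_pos (hA ▸ hn)).isDiscreteSubset
      (Set.finite_of_ncard_pos (hB ▸ hn)).isDiscreteSubset hf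
  · intro h A B f hA _ hf
    rcases A.eq_empty_or_nonempty with rfl | hne
    · exact ⟨Homeomorph.refl X, Set.eqOn_empty _ _⟩
    · exact h A.ncard ((Set.ncard_pos hA.finite).mpr hne) A B f rfl hf.ncard_eq.symm hf
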